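/- arXiv:2306.03947 — 7 statements merged into one kernel-verified Lean document; each statement's English description precedes it below -/
import Mathlib

section
/- For nonzero matrices M, N ∈ M_{n+1}(F) (n ≥ 2), the f-orthogonal complements of M and N intersect the hyperplane of trace-zero matrices in the same subspace if and only if the span of {M, I} equals the span of {N, I}, where I is the identity matrix. -/
/-!
Nondegeneracy of the trace form identifies a matrix `A` with the linear form `X ↦ tr (A X)`,
and `tr` itself is the form of `1`. A linear form vanishing on `ker φ ∩ ker ψ` lies in the span
of `φ` and `ψ`, so the trace-zero part of `B^⊥` contains that of `A^⊥` exactly when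
`B ∈ span {A, 1}`.
-/

open Matrix Module

theorem Submodule.span_pair_eq_span_pair_iff {R V : Type*} [Semiring R] [AddCommMonoid V]
    [Module R V] {x y z : V} :
    span R {x, z} = span R {y, z} ↔ x ∈ span R {y, z} ∧ y ∈ span R {x, z} := by
  have hz : ∀ w : V, z ∈ span R {w, z} := fun w => subset_span (by simp)
  simp only [le_antisymm_iff, span_le, Set.insert_subset_iff, Set.singleton_subset_iff,
    SetLike.mem_coe, hz, and_true]

theorem LinearMap.mem_span_pair_iff_of_injective {R V W : Type*} [Semiring R]
    [AddCommMonoid V] [AddCommMonoid W] [Module R V] [Module R W] {φ : V →ₗ[R] W}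
    (hφ : Function.Injective φ) {x a b : V} :
    φ x ∈ Submodule.span R {φ a, φ b} ↔ x ∈ Submodule.span R {a, b} := by
  simp only [Submodule.mem_span_pair, ← map_smul, ← map_add, hφ.eq_iff]

theorem Module.Dual.mem_span_pair_of_ker_inf_ker_le_ker {K V : Type*} [Field K]
    [AddCommGroup V] [Module K V] {f g h : Dual K V}
    (hker : LinearMap.ker f ⊓ LinearMap.ker g ≤ LinearMap.ker h) :
    h ∈ Submodule.span K {f, g} := by
  rw [← range_cons_cons_empty f g ![]]
  refine mem_span_of_iInf_ker_le_ker fun v hv => hker ?_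
  simp only [Submodule.mem_iInf, Fin.forall_fin_two] at hv
  exact hv

namespace Matrix

variable {ι R : Type*} [Fintype ι]

def traceMulLeft (ι R : Type*) [Fintype ι] [CommSemiring R] :
    Matrix ι ι R →ₗ[R] Dual R (Matrix ι ι R) :=
  (LinearMap.mul R (Matrix ι ι R)).compr₂ (traceLinearMap ι R R)

@[simp]
theorem traceMulLeft_apply [CommSemiring R] (A X : Matrix ι ι R) :
    traceMulLeft ι R A X = (A * X).trace :=
  rfl

theorem traceMulLeft_injective [CommSemiring R] : Function.Injective (traceMulLeft ι R) :=
  fun _ _ h => ext_iff_trace_mul_right.2 (LinearMap.congr_fun h)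

@[simp]
theorem traceMulLeft_one [CommSemiring R] [DecidableEq ι] :
    traceMulLeft ι R 1 = traceLinearMap ι R R := by
  ext; simp

variable [DecidableEq ι]

theorem mem_span_pair_one_iff_forall_trace_mul [Field R] {A B : Matrix ι ι R} :
    B ∈ Submodule.span R {A, 1} ↔
      ∀ X : Matrix ι ι R, (A * X).trace = 0 → X.trace = 0 → (B * X).trace = 0 := by
  constructor
  · rintro hB X hAX hX
    obtain ⟨a, b, rfl⟩ := Submodule.mem_span_pair.1 hB
    simp [add_mul, hAX, hX]
  · intro h
    rw [← LinearMap.mem_span_pair_iff_of_injective traceMulLeft_injective, traceMulLeft_one]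
    exact Dual.mem_span_pair_of_ker_inf_ker_le_ker fun X ⟨hAX, hX⟩ => h X hAX hX

theorem perp_inter_traceZero_subset_iff [Field R] {A B : Matrix ι ι R} :
    {X : Matrix ι ι R | (A * X).trace = 0} ∩ {X | X.trace = 0} ⊆
        {X | (B * X).trace = 0} ∩ {X | X.trace = 0} ↔
      B ∈ Submodule.span R {A, 1} := by
  rw [mem_span_pair_one_iff_forall_trace_mul, Set.subset_inter_iff,
    and_iff_left Set.inter_subset_right]
  exact ⟨fun h X hAX hX => h ⟨hAX, hX⟩, fun h X ⟨hAX, hX⟩ => h X hAX hX⟩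

end Matrix

theorem perp_inter_tracezero_eq_iff_general (F : Type*) [Field F] (n : ℕ)
    (M N : Matrix (Fin (n+1)) (Fin (n+1)) F) :
    ({X : Matrix (Fin (n+1)) (Fin (n+1)) F | (M * X).trace = 0} ∩
        {X | X.trace = 0}
      = {X : Matrix (Fin (n+1)) (Fin (n+1)) F | (N * X).trace = 0} ∩
        {X | X.trace = 0})
    ↔ Submodule.span F {M, (1 : Matrix (Fin (n+1)) (Fin (n+1)) F)}
        = Submodule.span F {N, (1 : Matrix (Fin (n+1)) (Fin (n+1)) F)} := by
  rw [Set.Subset.antisymm_iff, perp_inter_traceZero_subset_iff,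
    perp_inter_traceZero_subset_iff, Submodule.span_pair_eq_span_pair_iff, and_comm]

/-- For nonzero `M, N`, the `f`-perps of `M` and `N` meet the hyperplane of
trace-zero matrices in the same set iff `span {M, I} = span {N, I}`. -/
theorem perp_inter_tracezero_eq_iff (F : Type*) [Field F] (n : ℕ) (hn : 2 ≤ n)
    (M N : Matrix (Fin (n+1)) (Fin (n+1)) F) (hM : M ≠ 0) (hN : N ≠ 0) :
    ({X : Matrix (Fin (n+1)) (Fin (n+1)) F | (M * X).trace = 0} ∩
        {X | X.trace = 0}
      = {X : Matrix (Fin (n+1)) (Fin (n+1)) F | (N * X).trace = 0} ∩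
        {X | X.trace = 0})
    ↔ Submodule.span F {M, (1 : Matrix (Fin (n+1)) (Fin (n+1)) F)}
        = Submodule.span F {N, (1 : Matrix (Fin (n+1)) (Fin (n+1)) F)} :=
  perp_inter_tracezero_eq_iff_general F n M N
end

section
/- For a matrix M ∈ M_{n+1}(F), the following are equivalent: (1) M²x lies in the span of {x, Mx} for every nonzero x ∈ V; (2) ξM² lies in the span of {ξ, ξM} for every nonzero linear functional ξ ∈ V*. -/
/-!
Hypothesis (1) applied to a single well-chosen vector `v` gives a monic quadratic `q` with
`q(M) v = 0`. Choosing `v` with `F[X]`-annihilator equal to that of the whole module `V` (such a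
vector exists by the structure theorem over the PID `F[X]`) yields `q(M) = 0`, i.e.
`M² = aM + b`. Conversely such a relation gives (1) at once. The relation passes to `Mᵀ`, and
`ξ ↦ ξM` is `ξ ↦ Mᵀξ`, so (1) and (2) are both equivalent to `M` satisfying a quadratic relation.
-/

open Polynomial Module

namespace Module.End

variable {F V : Type*} [Field F] [AddCommGroup V] [Module F V] [FiniteDimensional F V]

theorem exists_forall_aeval_apply_eq_zero_imp (f : End F V) :
    ∃ v : V, ∀ p : F[X], aeval f p v = 0 → aeval f p = 0 := by
  obtain ⟨v, hv⟩ := exists_ker_toSpanSingleton_eq_annihilator F[X] (AEval' f)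
  obtain ⟨v, rfl⟩ := (AEval'.of f).surjective v
  refine ⟨v, fun p hp => ?_⟩
  have hp_ann : p ∈ annihilator F[X] (AEval' f) := by
    rw [← hv, LinearMap.mem_ker, LinearMap.toSpanSingleton_apply, ← AEval.of_aeval_smul,
      End.smul_def, hp, map_zero]
  rw [← span_minpoly_eq_annihilator, Ideal.mem_span_singleton] at hp_ann
  exact aeval_eq_zero_of_dvd_aeval_eq_zero hp_ann (minpoly.aeval F f)

theorem exists_mul_self_eq_of_forall_mem_span_pair (f : End F V)
    (h : ∀ x, f (f x) ∈ Submodule.span F {x, f x}) :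
    ∃ a b : F, f * f = a • f + b • 1 := by
  obtain ⟨v, hv⟩ := exists_forall_aeval_apply_eq_zero_imp f
  obtain ⟨b, a, hab⟩ := Submodule.mem_span_pair.mp (h v)
  have hq := hv (X ^ 2 - C a * X - C b) (by simp [pow_two, ← hab])
  refine ⟨a, b, ?_⟩
  simpa [pow_two, sub_eq_zero, sub_sub, Algebra.smul_def] using hq

end Module.End

namespace Matrix

variable {F ι : Type*} [Field F] [Fintype ι] [DecidableEq ι]

theorem mulVec_mulVec_mem_span_pair_of_mul_self_eq {M : Matrix ι ι F} {a b : F}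
    (hM : M * M = a • M + b • 1) (x : ι → F) :
    M *ᵥ M *ᵥ x ∈ Submodule.span F {x, M *ᵥ x} := by
  rw [mulVec_mulVec, hM, add_mulVec, smul_mulVec, smul_mulVec, one_mulVec]
  exact Submodule.mem_span_pair.mpr ⟨b, a, add_comm _ _⟩

theorem exists_mul_self_eq_of_forall_mulVec_mem_span_pair (M : Matrix ι ι F)
    (h : ∀ x : ι → F, x ≠ 0 → M *ᵥ M *ᵥ x ∈ Submodule.span F {x, M *ᵥ x}) :
    ∃ a b : F, M * M = a • M + b • 1 := by
  have h' : ∀ x, toLin' M (toLin' M x) ∈ Submodule.span F {x, toLin' M x} := by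
    intro x
    rcases eq_or_ne x 0 with rfl | hx
    · simp
    · exact h x hx
  obtain ⟨a, b, hab⟩ := End.exists_mul_self_eq_of_forall_mem_span_pair _ h'
  refine ⟨a, b, toLin'.injective ?_⟩
  rw [toLin'_mul, map_add, map_smul, map_smul, toLin'_one]
  exact hab

theorem transpose_mul_self_eq {M : Matrix ι ι F} {a b : F} (hM : M * M = a • M + b • 1) :
    Mᵀ * Mᵀ = a • Mᵀ + b • 1 := by
  rw [← transpose_mul, hM, transpose_add, transpose_smul, transpose_smul, transpose_one]

end Matrix

open Matrix in
/-- `M²x ∈ span {x, Mx}` for all nonzero `x` iff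
`ξM² ∈ span {ξ, ξM}` for all nonzero functionals (row vectors) `ξ`. -/
theorem square_in_span_right_iff_left (F : Type*) [Field F] (n : ℕ)
    (M : Matrix (Fin (n+1)) (Fin (n+1)) F) :
    (∀ x : Fin (n+1) → F, x ≠ 0 →
        M.mulVec (M.mulVec x) ∈ Submodule.span F {x, M.mulVec x})
      ↔ (∀ ξ : Fin (n+1) → F, ξ ≠ 0 →
          Matrix.vecMul (Matrix.vecMul ξ M) M
            ∈ Submodule.span F {ξ, Matrix.vecMul ξ M}) := by
  simp only [← mulVec_transpose]
  constructor
  · intro h ξ _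
    obtain ⟨a, b, hM⟩ := exists_mul_self_eq_of_forall_mulVec_mem_span_pair M h
    exact mulVec_mulVec_mem_span_pair_of_mul_self_eq (transpose_mul_self_eq hM) ξ
  · intro h x _
    obtain ⟨a, b, hM⟩ := exists_mul_self_eq_of_forall_mulVec_mem_span_pair Mᵀ h
    simpa only [transpose_transpose] using
      mulVec_mulVec_mem_span_pair_of_mul_self_eq (transpose_mul_self_eq hM) x
end

section
/- Let M ∈ M_{n+1}(F) have no eigenvalue in F and satisfy M²x ∈ span{x, Mx} for all nonzero x ∈ V. Then the collection of 2-dimensional subspaces {span{x, Mx} : x ∈ V, x ≠ 0} forms a partition of V ∖ {0} up to scalars; i.e., every nonzero vector of V lies in exactly one such 2-dimensional subspace (these subspaces give a line-spread of PG(n,F)). -/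
/-- If `M` has no eigenvalue in `F` and `M²x ∈ span {x, Mx}` for all nonzero
`x`, then the lines `span {x, Mx}` are 2-dimensional and every nonzero vector
lies in exactly one of them (a line-spread of `PG(n,F)`). -/
theorem spread_of_matrix (F : Type*) [Field F] (n : ℕ) (hn : Odd n)
    (M : Matrix (Fin (n+1)) (Fin (n+1)) F)
    (heig : ∀ (c : F) (x : Fin (n+1) → F), M.mulVec x = c • x → x = 0)
    (hS : ∀ x : Fin (n+1) → F, x ≠ 0 →
        M.mulVec (M.mulVec x) ∈ Submodule.span F {x, M.mulVec x}) :
    (∀ x : Fin (n+1) → F, x ≠ 0 →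
        Module.finrank F (Submodule.span F {x, M.mulVec x}) = 2) ∧
    (∀ v : Fin (n+1) → F, v ≠ 0 →
        ∃! W : Submodule F (Fin (n+1) → F),
          (∃ x : Fin (n+1) → F, x ≠ 0 ∧ W = Submodule.span F {x, M.mulVec x})
            ∧ v ∈ W) := by
  have hind : ∀ x : Fin (n+1) → F, x ≠ 0 → LinearIndependent F ![x, M.mulVec x] := by
    intro x hx
    rw [LinearIndependent.pair_iff]
    intro s t hst
    by_cases ht : t = 0
    · subst ht
      simp at hst
      rcases hst with h | h
      · exact ⟨h, rfl⟩
      · exact absurd h hx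
    · exfalso
      have h2 : t • M.mulVec x = (-s) • x := by
        linear_combination (norm := module) hst
      have h3 : M.mulVec x = t⁻¹ • ((-s) • x) :=
        ((inv_smul_eq_iff₀ ht).mpr h2.symm).symm
      rw [smul_smul] at h3
      exact hx (heig _ _ h3)
  have hdim : ∀ x : Fin (n+1) → F, x ≠ 0 →
      Module.finrank F (Submodule.span F {x, M.mulVec x}) = 2 := by
    intro x hx
    have h := (hind x hx)
    have : ({x, M.mulVec x} : Set (Fin (n+1) → F)) = Set.range ![x, M.mulVec x] := by
      simp [Matrix.range_cons, Matrix.range_empty, Set.pair_comm]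
    rw [this, finrank_span_eq_card h]
    simp
  refine ⟨hdim, ?_⟩
  intro v hv
  refine ⟨Submodule.span F {v, M.mulVec v}, ⟨⟨v, hv, rfl⟩,
    Submodule.subset_span (by simp)⟩, ?_⟩
  rintro W ⟨⟨x, hx, rfl⟩, hvW⟩
  -- v = a x + b Mx
  rw [show ({v, M.mulVec v} : Set _) = {v, M.mulVec v} from rfl]
  obtain ⟨a, b, hab⟩ := Submodule.mem_span_pair.mp hvW
  have hMvW : M.mulVec v ∈ Submodule.span F {x, M.mulVec x} := by
    have : M.mulVec v = a • M.mulVec x + b • M.mulVec (M.mulVec x) := by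
      rw [← hab]; simp [Matrix.mulVec_add, Matrix.mulVec_smul]
    rw [this]
    exact Submodule.add_mem _
      (Submodule.smul_mem _ _ (Submodule.subset_span (by simp)))
      (Submodule.smul_mem _ _ (hS x hx))
  symm
  apply Submodule.eq_of_le_of_finrank_le
  · rw [Submodule.span_le]
    rintro y (rfl | rfl)
    · exact hvW
    · exact hMvW
  · rw [hdim x hx, hdim v hv]
end

section
/- Let S be a line-spread of PG(n,F) and S* a dual line-spread (a family of codimension-2 subspaces such that every hyperplane contains exactly one member). Then condition (S): 'for every L ∈ S*, the members of S contained in L form a line-spread of L' is equivalent to condition (S*): 'for every ℓ ∈ S, the members of S* containing ℓ form a dual line-spread in the star of ℓ (i.e., every hyperplane containing ℓ contains exactly one member of S* that contains ℓ)'. -/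
/-- A line-spread: a family of 2-dimensional subspaces such that every
nonzero vector lies in exactly one member. -/
def IsLineSpread (F : Type*) [Field F] {V : Type*} [AddCommGroup V] [Module F V]
    (S : Set (Submodule F V)) : Prop :=
  (∀ W ∈ S, Module.finrank F W = 2) ∧
  ∀ v : V, v ≠ 0 → ∃! W, W ∈ S ∧ v ∈ W

/-- A dual line-spread of `PG(n,F)`: a family of codimension-2 subspaces of
`F^{n+1}` such that every hyperplane contains exactly one member. -/
def IsDualLineSpread (F : Type*) [Field F] (n : ℕ)
    (T : Set (Submodule F (Fin (n+1) → F))) : Prop :=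
  (∀ L ∈ T, Module.finrank F L = n - 1) ∧
  ∀ H : Submodule F (Fin (n+1) → F), Module.finrank F H = n →
    ∃! L, L ∈ T ∧ L ≤ H

/-- Condition (S): for every member `L` of the dual spread, the members of `S`
contained in `L` form a line-spread of `L`. -/
def CondS (F : Type*) [Field F] (n : ℕ)
    (S T : Set (Submodule F (Fin (n+1) → F))) : Prop :=
  ∀ L ∈ T, ∀ v : Fin (n+1) → F, v ∈ L → v ≠ 0 →
    ∃! W, W ∈ S ∧ W ≤ L ∧ v ∈ W

/-- Condition (S*): for every line `ℓ` of the spread, the members of the dual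
spread containing `ℓ` form a dual line-spread in the star of `ℓ`. -/
def CondSStar (F : Type*) [Field F] (n : ℕ)
    (S T : Set (Submodule F (Fin (n+1) → F))) : Prop :=
  ∀ ℓ ∈ S, ∀ H : Submodule F (Fin (n+1) → F), Module.finrank F H = n → ℓ ≤ H →
    ∃! L, L ∈ T ∧ ℓ ≤ L ∧ L ≤ H

open Module Submodule

private lemma step_up {F : Type*} [Field F] {V : Type*} [AddCommGroup V] [Module F V]
    [FiniteDimensional F V] (W : Submodule F V) (h : finrank F W < finrank F V) :
    ∃ W' : Submodule F V, W ≤ W' ∧ finrank F W' = finrank F W + 1 := by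
  have hW : W ≠ ⊤ := by
    intro hEq
    rw [hEq, finrank_top] at h
    exact lt_irrefl _ h
  have hlt : W < ⊤ := lt_top_iff_ne_top.mpr hW
  obtain ⟨v, hv1, hv2⟩ := SetLike.exists_of_lt hlt
  have hv0 : v ≠ 0 := fun h0 => hv2 (h0 ▸ W.zero_mem)
  refine ⟨W ⊔ F ∙ v, le_sup_left, ?_⟩
  have hdisj : W ⊓ (F ∙ v) = ⊥ := by
    rw [eq_bot_iff]
    rintro x ⟨hxW, hxv⟩
    obtain ⟨c, rfl⟩ := Submodule.mem_span_singleton.mp hxv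
    rcases eq_or_ne c 0 with rfl | hc
    · simp
    · have : c⁻¹ • c • v ∈ W := W.smul_mem c⁻¹ hxW
      rw [smul_smul, inv_mul_cancel₀ hc, one_smul] at this
      exact absurd this hv2
  have := Submodule.finrank_sup_add_finrank_inf_eq W (F ∙ v)
  rw [hdisj, finrank_bot, finrank_span_singleton hv0] at this
  omega

private lemma extend_to {F : Type*} [Field F] {V : Type*} [AddCommGroup V] [Module F V]
    [FiniteDimensional F V] (W : Submodule F V) (k : ℕ) (h1 : finrank F W ≤ k)
    (h2 : k ≤ finrank F V) : ∃ H : Submodule F V, W ≤ H ∧ finrank F H = k := by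
  induction k with
  | zero => exact ⟨W, le_refl _, by omega⟩
  | succ m ih =>
    rcases eq_or_lt_of_le h1 with heq | hlt
    · exact ⟨W, le_refl _, heq⟩
    · obtain ⟨H, hWH, hH⟩ := ih (by omega) (by omega)
      obtain ⟨H', hHH', hH'⟩ := step_up H (by omega)
      exact ⟨H', hWH.trans hHH', by omega⟩

private lemma inf_pos_finrank {F : Type*} [Field F] {V : Type*} [AddCommGroup V] [Module F V]
    [FiniteDimensional F V] {p : Submodule F V} (h : p ≠ ⊥) : 1 ≤ finrank F p := by
  by_contra hc
  push_neg at hc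
  interval_cases hp : finrank F p
  exact h (Submodule.finrank_eq_zero.mp hp)

/-- Conditions (S) and (S*) are equivalent. -/
theorem condS_iff_condSStar (F : Type*) [Field F] (n : ℕ)
    (hn : 3 ≤ n) (hodd : Odd n)
    (S T : Set (Submodule F (Fin (n+1) → F)))
    (hS : IsLineSpread F S) (hT : IsDualLineSpread F n T) :
    CondS F n S T ↔ CondSStar F n S T := by
  obtain ⟨hS2, hSu⟩ := hS
  obtain ⟨hT2, hTu⟩ := hT
  have hV : finrank F (Fin (n+1) → F) = n+1 := by
    simp [Module.finrank_pi]
  constructor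
  · -- (S) → (S*)
    intro hCS ℓ hℓ H hH hℓH
    obtain ⟨L, ⟨hLT, hLH⟩, hLuniq⟩ := hTu H hH
    have h1 : finrank F ℓ = 2 := hS2 ℓ hℓ
    have h2 : finrank F L = n - 1 := hT2 L hLT
    have hsup : finrank F ↥(ℓ ⊔ L) ≤ n := by
      have := Submodule.finrank_mono (sup_le hℓH hLH)
      omega
    have hsum := Submodule.finrank_sup_add_finrank_inf_eq ℓ L
    have hibot : ℓ ⊓ L ≠ ⊥ := by
      intro hb
      rw [hb, finrank_bot] at hsum
      omega
    obtain ⟨v, hvmem, hv0⟩ := Submodule.exists_mem_ne_zero_of_ne_bot hibot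
    obtain ⟨hvℓ, hvL⟩ := Submodule.mem_inf.mp hvmem
    obtain ⟨W, ⟨hWS, hWL, hWv⟩, _⟩ := hCS L hLT v hvL hv0
    obtain ⟨W', _, hW'u⟩ := hSu v hv0
    have e1 : ℓ = W' := hW'u ℓ ⟨hℓ, hvℓ⟩
    have e2 : W = W' := hW'u W ⟨hWS, hWv⟩
    have hℓW : ℓ = W := e1.trans e2.symm
    refine ⟨L, ⟨hLT, hℓW ▸ hWL, hLH⟩, ?_⟩
    rintro L' ⟨hL'T, _, hL'H⟩
    exact hLuniq L' ⟨hL'T, hL'H⟩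
  · -- (S*) → (S)
    intro hCSS L hLT v hvL hv0
    obtain ⟨ℓ, ⟨hℓS, hvℓ⟩, hℓu⟩ := hSu v hv0
    have h1 : finrank F ℓ = 2 := hS2 ℓ hℓS
    have h2 : finrank F L = n - 1 := hT2 L hLT
    have hibot : ℓ ⊓ L ≠ ⊥ := by
      intro hb
      have : v ∈ (⊥ : Submodule F (Fin (n+1) → F)) := hb ▸ Submodule.mem_inf.mpr ⟨hvℓ, hvL⟩
      exact hv0 (Submodule.mem_bot F |>.mp this)
    have hinf : 1 ≤ finrank F ↥(ℓ ⊓ L) := inf_pos_finrank hibot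
    have hsum := Submodule.finrank_sup_add_finrank_inf_eq ℓ L
    have hsup : finrank F ↥(ℓ ⊔ L) ≤ n := by omega
    obtain ⟨H, hle, hH⟩ := extend_to (ℓ ⊔ L) n hsup (by omega)
    have hℓH : ℓ ≤ H := le_sup_left.trans hle
    have hLH : L ≤ H := le_sup_right.trans hle
    obtain ⟨L', ⟨hL'T, hℓL', hL'H⟩, _⟩ := hCSS ℓ hℓS H hH hℓH
    obtain ⟨L'', _, hL''u⟩ := hTu H hH
    have e : L' = L := (hL''u L' ⟨hL'T, hL'H⟩).trans (hL''u L ⟨hLT, hLH⟩).symm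
    have hℓL : ℓ ≤ L := e ▸ hℓL'
    refine ⟨ℓ, ⟨hℓS, hℓL, hvℓ⟩, ?_⟩
    rintro W ⟨hWS, _, hWv⟩
    exact hℓu W ⟨hWS, hWv⟩
end

section
/- For every line-spread S of PG(n,F), there is at most one dual line-spread S* such that for every L ∈ S*, the members of S contained in L form a line-spread of L. -/
lemma dual_spread_subset (F : Type*) [Field F] (n : ℕ)
    (hn : 3 ≤ n)
    (S T₁ T₂ : Set (Submodule F (Fin (n+1) → F)))
    (hS : IsLineSpread F S)
    (hT₁ : IsDualLineSpread F n T₁) (hT₂ : IsDualLineSpread F n T₂)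
    (h₁ : CondS F n S T₁) (h₂ : CondS F n S T₂) :
    T₁ ⊆ T₂ := by
  intro L₁ hL₁
  have hrank₁ : Module.finrank F ↥L₁ = n - 1 := hT₁.1 L₁ hL₁
  have hV : Module.finrank F (Fin (n+1) → F) = n + 1 := Module.finrank_fin_fun F
  -- find a hyperplane H containing L₁
  obtain ⟨m, hm⟩ := Submodule.exists_of_finrank_lt (R := F) L₁ (by
    rw [hrank₁, hV]; omega)
  have hm0 : m ≠ 0 := by
    intro h
    exact hm 1 one_ne_zero (by simp [h])
  have hinf : L₁ ⊓ Submodule.span F {m} = ⊥ := by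
    rw [Submodule.eq_bot_iff]
    intro x hx
    rw [Submodule.mem_inf] at hx
    obtain ⟨hx1, hx2⟩ := hx
    rw [Submodule.mem_span_singleton] at hx2
    obtain ⟨r, rfl⟩ := hx2
    by_contra hx
    exact hm r (fun hr => hx (by simp [hr])) hx1
  have hH : Module.finrank F ↥(L₁ ⊔ Submodule.span F {m}) = n := by
    have := Submodule.finrank_sup_add_finrank_inf_eq L₁ (Submodule.span F {m})
    rw [hinf, finrank_bot, finrank_span_singleton hm0, hrank₁] at this
    omega
  obtain ⟨L₂, ⟨hL₂T, hL₂H⟩, _⟩ := hT₂.2 _ hH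
  have hrank₂ : Module.finrank F ↥L₂ = n - 1 := hT₂.1 L₂ hL₂T
  suffices h : L₂ = L₁ by rw [← h]; exact hL₂T
  by_contra hne
  -- pick v ∈ L₁ \ L₂
  have hnle : ¬ L₁ ≤ L₂ := by
    intro hle
    exact hne (Submodule.eq_of_le_of_finrank_eq hle (by rw [hrank₁, hrank₂])).symm
  obtain ⟨v, hvL₁, hvL₂⟩ := SetLike.not_le_iff_exists.mp hnle
  have hv0 : v ≠ 0 := fun h => hvL₂ (h ▸ L₂.zero_mem)
  obtain ⟨W, ⟨hWS, hWL₁, hvW⟩, -⟩ := h₁ L₁ hL₁ v hvL₁ hv0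
  have hW2 : Module.finrank F ↥W = 2 := hS.1 W hWS
  -- the intersection M = L₁ ⊓ L₂ has dimension ≥ n - 2
  have hsup : Module.finrank F ↥(L₁ ⊔ L₂) ≤ n := by
    exact le_trans (Submodule.finrank_mono (sup_le le_sup_left hL₂H)) (le_of_eq hH)
  have hM : n - 2 ≤ Module.finrank F ↥(L₁ ⊓ L₂) := by
    have := Submodule.finrank_sup_add_finrank_inf_eq L₁ L₂
    rw [hrank₁, hrank₂] at this
    omega
  -- W ⊓ (L₁ ⊓ L₂) is nonzero
  have hWMsup : Module.finrank F ↥(W ⊔ (L₁ ⊓ L₂)) ≤ n - 1 := by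
    rw [← hrank₁]
    exact Submodule.finrank_mono (sup_le hWL₁ inf_le_left)
  have hWM : 1 ≤ Module.finrank F ↥(W ⊓ (L₁ ⊓ L₂)) := by
    have := Submodule.finrank_sup_add_finrank_inf_eq W (L₁ ⊓ L₂)
    rw [hW2] at this
    omega
  have hne' : W ⊓ (L₁ ⊓ L₂) ≠ ⊥ := by
    intro h
    rw [h, finrank_bot] at hWM
    omega
  obtain ⟨u, hu, hu0⟩ := Submodule.ne_bot_iff _ |>.mp hne'
  obtain ⟨huW, huL₁, huL₂⟩ : u ∈ W ∧ u ∈ L₁ ∧ u ∈ L₂ := ⟨hu.1, hu.2.1, hu.2.2⟩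
  obtain ⟨W', ⟨hW'S, hW'L₂, huW'⟩, -⟩ := h₂ L₂ hL₂T u huL₂ hu0
  obtain ⟨Wu, -, hWuuniq⟩ := hS.2 u hu0
  have : W = W' := by
    rw [hWuuniq W ⟨hWS, huW⟩, hWuuniq W' ⟨hW'S, huW'⟩]
  exact hvL₂ (hW'L₂ (this ▸ hvW))

/-- A line-spread admits at most one dual. -/
theorem dual_spread_unique (F : Type*) [Field F] (n : ℕ)
    (hn : 3 ≤ n) (hodd : Odd n)
    (S T₁ T₂ : Set (Submodule F (Fin (n+1) → F)))
    (hS : IsLineSpread F S)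
    (hT₁ : IsDualLineSpread F n T₁) (hT₂ : IsDualLineSpread F n T₂)
    (h₁ : CondS F n S T₁) (h₂ : CondS F n S T₂) :
    T₁ = T₂ :=
  Set.Subset.antisymm
    (dual_spread_subset F n hn S T₁ T₂ hS hT₁ hT₂ h₁ h₂)
    (dual_spread_subset F n hn S T₂ T₁ hS hT₂ hT₁ h₂ h₁)
end

section
/- Let S be a line-spread of PG(n,F) admitting a dual S*, meaning: every nonzero vector lies in exactly one member of S, every hyperplane contains exactly one member of S*, and for every L ∈ S* the members of S inside L form a line-spread of L. Then for every point-hyperplane flag (p,H) (p a point of PG(n,F), H a hyperplane containing p), the hyperplane H contains the spread line ℓ_p through p if and only if p lies in the member L_H of S* contained in H. -/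
/-- For a flag `(p,H)`, the hyperplane `H` contains the spread line `ℓ`
through `p` iff `p` lies in the member `L` of the dual spread inside `H`. -/
theorem flag_spread_duality (F : Type*) [Field F] (n : ℕ)
    (hn : 3 ≤ n) (hodd : Odd n)
    (S T : Set (Submodule F (Fin (n+1) → F)))
    (hS : IsLineSpread F S) (hT : IsDualLineSpread F n T)
    (hdual : CondS F n S T)
    (p : Fin (n+1) → F) (hp : p ≠ 0)
    (H : Submodule F (Fin (n+1) → F)) (hH : Module.finrank F H = n)
    (hpH : p ∈ H)
    (ℓ : Submodule F (Fin (n+1) → F)) (hℓ : ℓ ∈ S) (hpℓ : p ∈ ℓ)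
    (L : Submodule F (Fin (n+1) → F)) (hL : L ∈ T) (hLH : L ≤ H) :
    ℓ ≤ H ↔ p ∈ L := by
  obtain ⟨hS2, hSuniq⟩ := hS
  constructor
  · intro hℓH
    have hinf : ℓ ⊓ L ≠ ⊥ := by
      intro hbot
      have hrank := Submodule.finrank_sup_add_finrank_inf_eq ℓ L
      rw [hbot, finrank_bot] at hrank
      have h1 : Module.finrank F ℓ = 2 := hS2 ℓ hℓ
      have h2 : Module.finrank F L = n - 1 := hT.1 L hL
      have hle : ℓ ⊔ L ≤ H := sup_le hℓH hLH
      have hup := Submodule.finrank_mono hle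
      omega
    obtain ⟨v, hv, hv0⟩ := Submodule.exists_mem_ne_zero_of_ne_bot hinf
    obtain ⟨W, ⟨hWS, hWL, hvW⟩, _⟩ := hdual L hL v hv.2 hv0
    obtain ⟨W', _, hu'⟩ := hSuniq v hv0
    have e1 : W = W' := hu' W ⟨hWS, hvW⟩
    have e2 : ℓ = W' := hu' ℓ ⟨hℓ, hv.1⟩
    have : ℓ ≤ L := by rw [e2, ← e1]; exact hWL
    exact this hpℓ
  · intro hpL
    obtain ⟨W, ⟨hWS, hWL, hpW⟩, _⟩ := hdual L hL p hpL hp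
    obtain ⟨W', _, hu'⟩ := hSuniq p hp
    have e1 : W = W' := hu' W ⟨hWS, hpW⟩
    have e2 : ℓ = W' := hu' ℓ ⟨hℓ, hpℓ⟩
    have hℓL : ℓ ≤ L := by rw [e2, ← e1]; exact hWL
    exact hℓL.trans hLH
end

section
/- Let S be a line-spread of PG(n,F) admitting a dual. Define H_S to be the set of point-hyperplane flags (p,H) such that H contains the spread line through p. Then H_S is a geometric hyperplane of the flag geometry A_{n,{1,n}}(F): it is a proper subset that meets every line of the geometry, and any line meeting it in more than one point is entirely contained in it. -/
open Module Submodule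
set_option linter.unusedSectionVars false
set_option linter.unusedVariables false
set_option maxHeartbeats 1000000

section Helpers
variable {F : Type*} [Field F] {V : Type*} [AddCommGroup V] [Module F V] [FiniteDimensional F V]

lemma my_inf_ge' {A B C : Submodule F V} (hA : A ≤ C) (hB : B ≤ C) :
    finrank F A + finrank F B ≤ finrank F C + finrank F (A ⊓ B : Submodule F V) := by
  have h := Submodule.finrank_sup_add_finrank_inf_eq A B
  have h2 : finrank F (A ⊔ B : Submodule F V) ≤ finrank F C :=
    Submodule.finrank_mono (sup_le hA hB)
  omega

lemma my_exists_ne_zero {W : Submodule F V} (h : 0 < finrank F W) : ∃ v ∈ W, v ≠ 0 := by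
  rw [← Submodule.ne_bot_iff]
  intro hb
  rw [hb] at h
  simp at h

lemma my_eq_span {P : Submodule F V} {v : V} (hd : finrank F P = 1) (hv : v ∈ P) (h0 : v ≠ 0) :
    P = Submodule.span F {v} := by
  refine (Submodule.eq_of_le_of_finrank_eq ?_ ?_).symm
  · simpa [Submodule.span_singleton_le_iff_mem] using hv
  · rw [finrank_span_singleton h0, hd]

/-- A hyperplane containing `U` and avoiding `w`. -/
lemma my_exists_hyperplane_avoid {U : Submodule F V} {w : V} (hw : w ∉ U) :
    ∃ H : Submodule F V, U ≤ H ∧ finrank F H + 1 = finrank F V ∧ w ∉ H := by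
  have h0 : w ≠ 0 := fun h => hw (h ▸ U.zero_mem)
  have hdisj : Disjoint U (Submodule.span F {w}) :=
    (Submodule.disjoint_span_singleton' h0).mpr hw
  obtain ⟨C, hC⟩ := Submodule.exists_isCompl (U ⊔ Submodule.span F {w})
  have hrank : finrank F (U ⊔ C : Submodule F V) + 1 = finrank F V := by
    have h1 : finrank F (U ⊔ Submodule.span F {w} : Submodule F V) + finrank F C = finrank F V :=
      Submodule.finrank_add_eq_of_isCompl hC
    have h2 := Submodule.finrank_sup_add_finrank_inf_eq U (Submodule.span F {w})
    rw [disjoint_iff.mp hdisj] at h2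
    have h3 := Submodule.finrank_sup_add_finrank_inf_eq U C
    have h4 : U ⊓ C = ⊥ := by
      rw [← le_bot_iff]
      refine le_trans ?_ (disjoint_iff.mp hC.disjoint).le
      exact inf_le_inf_right C le_sup_left
    rw [h4] at h3
    have h5 : finrank F (Submodule.span F {w}) = 1 := finrank_span_singleton h0
    simp only [finrank_bot] at h2 h3
    omega
  refine ⟨U ⊔ C, le_sup_left, hrank, ?_⟩
  intro hwm
  have htop : (⊤ : Submodule F V) ≤ U ⊔ C := by
    rw [← hC.codisjoint.eq_top]
    refine sup_le (sup_le le_sup_left ?_) le_sup_right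
    simpa [Submodule.span_singleton_le_iff_mem] using hwm
  have : finrank F V ≤ finrank F (U ⊔ C : Submodule F V) := by
    calc finrank F V = finrank F (⊤ : Submodule F V) := (finrank_top F V).symm
    _ ≤ _ := Submodule.finrank_mono htop
  omega

end Helpers


/-- A point of the flag geometry `A_{n,{1,n}}(F)`: a point-hyperplane flag of
`PG(n,F)`. -/
structure ProjFlag (F : Type*) [Field F] (n : ℕ) where
  P : Submodule F (Fin (n+1) → F)
  H : Submodule F (Fin (n+1) → F)
  dimP : Module.finrank F P = 1
  dimH : Module.finrank F H = n
  le : P ≤ H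

/-- The lines of `A_{n,{1,n}}(F)`: either all flags `(p,H₀)` with `p` on a
fixed line `ℓ ⊆ H₀`, or all flags `(P₀,H)` with `H` containing a fixed
codimension-2 subspace `L₀ ⊇ P₀`. -/
def IsLine (F : Type*) [Field F] (n : ℕ) (L : Set (ProjFlag F n)) : Prop :=
  (∃ ℓ H₀ : Submodule F (Fin (n+1) → F), Module.finrank F ℓ = 2 ∧
      Module.finrank F H₀ = n ∧ ℓ ≤ H₀ ∧
      L = {f : ProjFlag F n | f.H = H₀ ∧ f.P ≤ ℓ}) ∨
  (∃ P₀ L₀ : Submodule F (Fin (n+1) → F), Module.finrank F P₀ = 1 ∧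
      Module.finrank F L₀ = n - 1 ∧ P₀ ≤ L₀ ∧
      L = {f : ProjFlag F n | f.P = P₀ ∧ L₀ ≤ f.H})

/-- The hyperplane of spread type: flags `(p,H)` such that `H` contains the
spread line through `p`. -/
def SpreadHyp (F : Type*) [Field F] (n : ℕ)
    (S : Set (Submodule F (Fin (n+1) → F))) : Set (ProjFlag F n) :=
  {f : ProjFlag F n | ∃ ℓ ∈ S, f.P ≤ ℓ ∧ ℓ ≤ f.H}

section Aux
variable {F : Type*} [Field F] {n : ℕ}

lemma flag_ext {f g : ProjFlag F n} (h1 : f.P = g.P) (h2 : f.H = g.H) : f = g := by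
  cases f; cases g; simp_all

lemma finrank_V (F : Type*) [Field F] (n : ℕ) : finrank F (Fin (n+1) → F) = n + 1 := by
  simp [Module.finrank_pi]

/-- A spread line inside a hyperplane lies inside the dual-spread member of
that hyperplane. -/
lemma aux_spread_le (hn : 3 ≤ n) {S T : Set (Submodule F (Fin (n+1) → F))}
    (hS : IsLineSpread F S) (hT : IsDualLineSpread F n T) (hdual : CondS F n S T)
    {W L H : Submodule F (Fin (n+1) → F)} (hW : W ∈ S) (hL : L ∈ T)
    (hWH : W ≤ H) (hLH : L ≤ H) (hH : finrank F H = n) : W ≤ L := by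
  have hW2 : finrank F W = 2 := hS.1 W hW
  have hL1 : finrank F L = n - 1 := hT.1 L hL
  have hinf := my_inf_ge' hWH hLH
  have hpos : 0 < finrank F (W ⊓ L : Submodule F (Fin (n+1) → F)) := by omega
  obtain ⟨v, hv, hv0⟩ := my_exists_ne_zero hpos
  obtain ⟨W', ⟨hW'S, hW'L, hvW'⟩, _⟩ := hdual L hL v (hv.2) hv0
  obtain ⟨W₀, _, huniq⟩ := hS.2 v hv0
  have e1 : W = W₀ := huniq W ⟨hW, hv.1⟩
  have e2 : W' = W₀ := huniq W' ⟨hW'S, hvW'⟩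
  rw [e1, ← e2]; exact hW'L

end Aux

/-- The set of flags `(p,H)` with `H` containing the spread line through `p`
is a geometric hyperplane of `A_{n,{1,n}}(F)`. -/
theorem spreadHyp_is_geometric_hyperplane (F : Type*) [Field F] (n : ℕ)
    (hn : 3 ≤ n) (hodd : Odd n)
    (S T : Set (Submodule F (Fin (n+1) → F)))
    (hS : IsLineSpread F S) (hT : IsDualLineSpread F n T)
    (hdual : CondS F n S T) :
    SpreadHyp F n S ≠ Set.univ ∧
    (∀ L : Set (ProjFlag F n), IsLine F n L → (L ∩ SpreadHyp F n S).Nonempty) ∧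
    (∀ L : Set (ProjFlag F n), IsLine F n L →
      ∀ f ∈ L, ∀ g ∈ L, f ∈ SpreadHyp F n S → g ∈ SpreadHyp F n S →
        f ≠ g → L ⊆ SpreadHyp F n S) := by
  have hV := finrank_V F n
  refine ⟨?_, ?_, ?_⟩
  · -- proper
    obtain ⟨v, -, hv0⟩ := my_exists_ne_zero (W := (⊤ : Submodule F (Fin (n+1) → F)))
      (by rw [finrank_top, hV]; omega)
    obtain ⟨W, ⟨hWS, hvW⟩, hWu⟩ := hS.2 v hv0
    have hW2 : finrank F W = 2 := hS.1 W hWS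
    have hP1 : finrank F (Submodule.span F {v}) = 1 := finrank_span_singleton hv0
    have hPW : Submodule.span F {v} ≤ W := by
      simpa [Submodule.span_singleton_le_iff_mem] using hvW
    obtain ⟨w, hwW, hwP⟩ : ∃ w ∈ W, w ∉ Submodule.span F {v} := by
      by_contra hcon
      push_neg at hcon
      have : finrank F W ≤ finrank F (Submodule.span F {v}) :=
        Submodule.finrank_mono hcon
      omega
    obtain ⟨H, hPH, hHr, hwH⟩ := my_exists_hyperplane_avoid hwP
    have hHn : finrank F H = n := by omega
    set f : ProjFlag F n := ⟨Submodule.span F {v}, H, hP1, hHn, hPH⟩ with hf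
    have hfno : f ∉ SpreadHyp F n S := by
      rintro ⟨ℓ, hℓS, hPℓ, hℓH⟩
      have hvℓ : v ∈ ℓ := hPℓ (Submodule.mem_span_singleton_self v)
      have : ℓ = W := by
        obtain ⟨W₀, _, huniq⟩ := hS.2 v hv0
        rw [huniq ℓ ⟨hℓS, hvℓ⟩, huniq W ⟨hWS, hvW⟩]
      exact hwH (hℓH (this ▸ hwW))
    intro h
    exact hfno (h.symm ▸ Set.mem_univ f)
  · -- every line meets
    rintro L (⟨ℓ, H₀, hℓ2, hH₀, hℓH₀, rfl⟩ | ⟨P₀, L₀, hP₀, hL₀, hPL, rfl⟩)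
    · obtain ⟨Ld, ⟨hLdT, hLdH⟩, -⟩ := hT.2 H₀ hH₀
      have hLd1 : finrank F Ld = n - 1 := hT.1 Ld hLdT
      have hinf := my_inf_ge' hℓH₀ hLdH
      obtain ⟨v, hv, hv0⟩ := my_exists_ne_zero
        (W := (ℓ ⊓ Ld : Submodule F (Fin (n+1) → F))) (by omega)
      obtain ⟨W, ⟨hWS, hWLd, hvW⟩, -⟩ := hdual Ld hLdT v hv.2 hv0
      refine ⟨⟨Submodule.span F {v}, H₀, finrank_span_singleton hv0, hH₀, ?_⟩, ⟨rfl, ?_⟩,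
        W, hWS, ?_, hWLd.trans hLdH⟩
      · simpa [Submodule.span_singleton_le_iff_mem] using hℓH₀ hv.1
      · simpa [Submodule.span_singleton_le_iff_mem] using hv.1
      · simpa [Submodule.span_singleton_le_iff_mem] using hvW
    · obtain ⟨v, hv, hv0⟩ := my_exists_ne_zero (W := P₀) (by omega)
      obtain ⟨W, ⟨hWS, hvW⟩, -⟩ := hS.2 v hv0
      have hW2 : finrank F W = 2 := hS.1 W hWS
      have hPW : P₀ ≤ W := by
        rw [my_eq_span hP₀ hv hv0]
        simpa [Submodule.span_singleton_le_iff_mem] using hvW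
      have hinfP : (1 : ℕ) ≤ finrank F (L₀ ⊓ W : Submodule F (Fin (n+1) → F)) := by
        have : P₀ ≤ L₀ ⊓ W := le_inf hPL hPW
        have := Submodule.finrank_mono this
        omega
      have hsup := Submodule.finrank_sup_add_finrank_inf_eq L₀ W
      have hUn : finrank F (L₀ ⊔ W : Submodule F (Fin (n+1) → F)) ≤ n := by omega
      have hUne : (L₀ ⊔ W : Submodule F (Fin (n+1) → F)) ≠ ⊤ := by
        intro h
        rw [h, finrank_top, hV] at hUn
        omega
      obtain ⟨w, hw⟩ : ∃ w, w ∉ (L₀ ⊔ W : Submodule F (Fin (n+1) → F)) := by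
        by_contra hcon
        push_neg at hcon
        exact hUne (Submodule.eq_top_iff'.mpr hcon)
      obtain ⟨H, hUH, hHr, -⟩ := my_exists_hyperplane_avoid hw
      have hHn : finrank F H = n := by omega
      refine ⟨⟨P₀, H, hP₀, hHn, hPL.trans ((le_sup_left).trans hUH)⟩,
        ⟨rfl, (le_sup_left).trans hUH⟩,
        W, hWS, hPW, (le_sup_right).trans hUH⟩
  · -- one or all
    rintro L (⟨ℓ, H₀, hℓ2, hH₀, hℓH₀, rfl⟩ | ⟨P₀, L₀, hP₀, hL₀, hPL, rfl⟩) f hf g hg hfS hgS hfg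
    · obtain ⟨hfH, hfP⟩ := hf
      obtain ⟨hgH, hgP⟩ := hg
      have hPne : f.P ≠ g.P := fun h => hfg (flag_ext h (hfH.trans hgH.symm))
      obtain ⟨Ld, ⟨hLdT, hLdH⟩, -⟩ := hT.2 H₀ hH₀
      obtain ⟨Wf, hWfS, hfPW, hWfH⟩ := hfS
      obtain ⟨Wg, hWgS, hgPW, hWgH⟩ := hgS
      rw [hfH] at hWfH
      rw [hgH] at hWgH
      have hWfLd : Wf ≤ Ld := aux_spread_le hn hS hT hdual hWfS hLdT hWfH hLdH hH₀
      have hWgLd : Wg ≤ Ld := aux_spread_le hn hS hT hdual hWgS hLdT hWgH hLdH hH₀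
      -- f.P ⊔ g.P = ℓ
      have hinfbot : (f.P ⊓ g.P : Submodule F (Fin (n+1) → F)) = ⊥ := by
        by_contra hne
        have h1 : 0 < finrank F (f.P ⊓ g.P : Submodule F (Fin (n+1) → F)) := by
          rcases Nat.eq_zero_or_pos (finrank F (f.P ⊓ g.P : Submodule F (Fin (n+1) → F)))
            with h | h
          · exact absurd (Submodule.finrank_eq_zero.mp h) hne
          · exact h
        have h2 : finrank F (f.P ⊓ g.P : Submodule F (Fin (n+1) → F)) ≤ 1 := by
          have := Submodule.finrank_mono
            (inf_le_left : (f.P ⊓ g.P : Submodule F (Fin (n+1) → F)) ≤ f.P)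
          rw [f.dimP] at this
          exact this
        have e1 : (f.P ⊓ g.P : Submodule F (Fin (n+1) → F)) = f.P :=
          Submodule.eq_of_le_of_finrank_eq inf_le_left (by rw [f.dimP]; omega)
        have e2 : (f.P ⊓ g.P : Submodule F (Fin (n+1) → F)) = g.P :=
          Submodule.eq_of_le_of_finrank_eq inf_le_right (by rw [g.dimP]; omega)
        exact hPne (e1 ▸ e2)
      have hsup2 : finrank F (f.P ⊔ g.P : Submodule F (Fin (n+1) → F)) = 2 := by
        have := Submodule.finrank_sup_add_finrank_inf_eq f.P g.P
        rw [hinfbot, finrank_bot, f.dimP, g.dimP] at this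
        omega
      have hsupℓ : (f.P ⊔ g.P : Submodule F (Fin (n+1) → F)) = ℓ :=
        Submodule.eq_of_le_of_finrank_eq (sup_le hfP hgP) (by rw [hsup2, hℓ2])
      have hℓLd : ℓ ≤ Ld := by
        rw [← hsupℓ]
        exact sup_le (hfPW.trans hWfLd) (hgPW.trans hWgLd)
      rintro h ⟨hhH, hhP⟩
      obtain ⟨v, hv, hv0⟩ := my_exists_ne_zero (W := h.P) (by rw [h.dimP]; omega)
      obtain ⟨W, ⟨hWS, hWLd, hvW⟩, -⟩ := hdual Ld hLdT v (hℓLd (hhP hv)) hv0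
      refine ⟨W, hWS, ?_, by rw [hhH]; exact hWLd.trans hLdH⟩
      rw [my_eq_span h.dimP hv hv0]
      simpa [Submodule.span_singleton_le_iff_mem] using hvW
    · obtain ⟨hfP, hfH⟩ := hf
      obtain ⟨hgP, hgH⟩ := hg
      have hHne : f.H ≠ g.H := fun h => hfg (flag_ext (hfP.trans hgP.symm) h)
      obtain ⟨Wf, hWfS, hfPW, hWfH⟩ := hfS
      obtain ⟨Wg, hWgS, hgPW, hWgH⟩ := hgS
      obtain ⟨v, hv, hv0⟩ := my_exists_ne_zero (W := P₀) (by omega)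
      have hvWf : v ∈ Wf := hfPW (hfP ▸ hv)
      have hvWg : v ∈ Wg := hgPW (hgP ▸ hv)
      have hWfg : Wf = Wg := by
        obtain ⟨W₀, -, huniq⟩ := hS.2 v hv0
        rw [huniq Wf ⟨hWfS, hvWf⟩, huniq Wg ⟨hWgS, hvWg⟩]
      have hPWf : P₀ ≤ Wf := by
        rw [my_eq_span hP₀ hv hv0]
        simpa [Submodule.span_singleton_le_iff_mem] using hvWf
      have hWf2 : finrank F Wf = 2 := hS.1 Wf hWfS
      -- claim : Wf ≤ L₀
      have hWL : Wf ≤ L₀ := by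
        by_contra hnle
        have hinf1 : finrank F (L₀ ⊓ Wf : Submodule F (Fin (n+1) → F)) = 1 := by
          have hge : (1:ℕ) ≤ finrank F (L₀ ⊓ Wf : Submodule F (Fin (n+1) → F)) := by
            have := Submodule.finrank_mono (le_inf hPL hPWf)
            omega
          have hle2 : finrank F (L₀ ⊓ Wf : Submodule F (Fin (n+1) → F)) ≤ 2 := by
            have := Submodule.finrank_mono
              (inf_le_right : (L₀ ⊓ Wf : Submodule F (Fin (n+1) → F)) ≤ Wf)
            omega
          rcases Nat.lt_or_ge (finrank F (L₀ ⊓ Wf : Submodule F (Fin (n+1) → F))) 2 with h | h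
          · omega
          · exfalso
            have : (L₀ ⊓ Wf : Submodule F (Fin (n+1) → F)) = Wf :=
              Submodule.eq_of_le_of_finrank_eq inf_le_right (by omega)
            exact hnle (this ▸ inf_le_left)
        have hsupn : finrank F (L₀ ⊔ Wf : Submodule F (Fin (n+1) → F)) = n := by
          have := Submodule.finrank_sup_add_finrank_inf_eq L₀ Wf
          omega
        have hUf : (L₀ ⊔ Wf : Submodule F (Fin (n+1) → F)) = f.H :=
          Submodule.eq_of_le_of_finrank_eq (sup_le hfH hWfH) (by rw [hsupn, f.dimH])
        have hUg : (L₀ ⊔ Wf : Submodule F (Fin (n+1) → F)) = g.H :=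
          Submodule.eq_of_le_of_finrank_eq (sup_le hgH (hWfg ▸ hWgH)) (by rw [hsupn, g.dimH])
        exact hHne (hUf ▸ hUg)
      rintro h ⟨hhP, hhH⟩
      exact ⟨Wf, hWfS, hhP ▸ hPWf, hWL.trans hhH⟩
end
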